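/- Let 𝒜 be a finite collection of networks satisfying joint positivity and containing at least one network that correctly specifies the interference structure. Under consistency, for every pair of distinct exposure levels c_k ≠ c_ℓ, the proposed variance estimator is conservative: E_Z[V̂ar(τ̂_𝒜(c_k,c_ℓ))(Z)] ≥ Var_Z[τ̂_𝒜(c_k,c_ℓ)(Z)], where V̂ar(τ̂_𝒜(c_k,c_ℓ)) = V̂ar(μ̂_𝒜(c_k)) + V̂ar(μ̂_𝒜(c_ℓ)) − 2·Ĉov(μ̂_𝒜(c_k), μ̂_𝒜(c_ℓ)). -/
import Mathlib


open Finset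

noncomputable section

open scoped Classical

/-- A network on `n` units: symmetric Boolean adjacency matrix with zero diagonal. -/
def IsNetwork {n : ℕ} (A : Fin n → Fin n → Bool) : Prop :=
  (∀ i j, A i j = A j i) ∧ ∀ i, A i i = false

/-- Real-valued indicator of a proposition. -/
def ind (p : Prop) [Decidable p] : ℝ := if p then 1 else 0

/-- Expectation of `g` with respect to the distribution `P` on the finite treatment space. -/
def expec {Z : Type} [Fintype Z] (P : Z → ℝ) (g : Z → ℝ) : ℝ := ∑ z, P z * g z

/-- Exposure probability `p_i^A(c)`. -/
def pExp {n : ℕ} {Z C : Type} [Fintype Z] [DecidableEq C] (P : Z → ℝ)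
    (f : Z → (Fin n → Bool) → C) (A : Fin n → Fin n → Bool) (i : Fin n) (c : C) : ℝ :=
  expec P (fun z => ind (f z (A i) = c))

/-- The network `A` satisfies positivity. -/
def Positivity {n : ℕ} {Z C : Type} [Fintype Z] [DecidableEq C] (P : Z → ℝ)
    (f : Z → (Fin n → Bool) → C) (A : Fin n → Fin n → Bool) : Prop :=
  ∀ (i : Fin n) (c : C), 0 < pExp P f A i c

/-- The network `A` correctly specifies the interference structure:
positivity together with `Y_i(z) = Ỹ_i(f(z, A_i))`. -/
def CorrectlySpecifies {n : ℕ} {Z C : Type} [Fintype Z] [DecidableEq C] (P : Z → ℝ)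
    (f : Z → (Fin n → Bool) → C) (Y : Fin n → Z → ℝ) (Yt : Fin n → C → ℝ)
    (A : Fin n → Fin n → Bool) : Prop :=
  Positivity P f A ∧ ∀ (i : Fin n) (z : Z), Y i z = Yt i (f z (A i))

/-- Mean potential outcome `μ(c)`. -/
def muBar {n : ℕ} {C : Type} (Yt : Fin n → C → ℝ) (c : C) : ℝ :=
  (1 / (n : ℝ)) * ∑ i, Yt i c

/-- Causal effect `τ(c, c')`. -/
def tauBar {n : ℕ} {C : Type} (Yt : Fin n → C → ℝ) (c c' : C) : ℝ :=
  muBar Yt c - muBar Yt c'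

/-- Horvitz–Thompson estimator of `μ(c)` using network `A` and observed outcomes `Yo`. -/
def muHat {n : ℕ} {Z C : Type} [Fintype Z] [DecidableEq C] (P : Z → ℝ)
    (f : Z → (Fin n → Bool) → C) (A : Fin n → Fin n → Bool) (Yo : Z → Fin n → ℝ)
    (c : C) (z : Z) : ℝ :=
  (1 / (n : ℝ)) * ∑ i, ind (f z (A i) = c) * Yo z i / pExp P f A i c

/-- Plug-in Horvitz–Thompson estimator of `τ(c, c')`. -/
def tauHat {n : ℕ} {Z C : Type} [Fintype Z] [DecidableEq C] (P : Z → ℝ)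
    (f : Z → (Fin n → Bool) → C) (A : Fin n → Fin n → Bool) (Yo : Z → Fin n → ℝ)
    (c c' : C) (z : Z) : ℝ :=
  muHat P f A Yo c z - muHat P f A Yo c' z

/-- Joint exposure probability `p_i^{(A, A')}(c, c')`. -/
def pJoint {n : ℕ} {Z C : Type} [Fintype Z] [DecidableEq C] (P : Z → ℝ)
    (f : Z → (Fin n → Bool) → C) (A A' : Fin n → Fin n → Bool) (i : Fin n) (c c' : C) : ℝ :=
  expec P (fun z => ind (f z (A i) = c) * ind (f z (A' i) = c'))

/-- Conditional exposure probability `p_i(c; A ∣ c'; A')`. -/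
def pCond {n : ℕ} {Z C : Type} [Fintype Z] [DecidableEq C] (P : Z → ℝ)
    (f : Z → (Fin n → Bool) → C) (A A' : Fin n → Fin n → Bool) (i : Fin n) (c c' : C) : ℝ :=
  pJoint P f A A' i c c' / pExp P f A' i c'

/-- Indicator `I_i^𝒜(z, c)` that unit `i` has exposure `c` under every network in `𝒜`. -/
def indAll {n : ℕ} {Z C : Type} [DecidableEq C] (f : Z → (Fin n → Bool) → C)
    (𝒜 : Finset (Fin n → Fin n → Bool)) (z : Z) (i : Fin n) (c : C) : ℝ :=
  ∏ A ∈ 𝒜, ind (f z (A i) = c)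

/-- Joint exposure probability `p_i^𝒜(c)`. -/
def pNMR {n : ℕ} {Z C : Type} [Fintype Z] [DecidableEq C] (P : Z → ℝ)
    (f : Z → (Fin n → Bool) → C) (𝒜 : Finset (Fin n → Fin n → Bool)) (i : Fin n) (c : C) : ℝ :=
  expec P (fun z => indAll f 𝒜 z i c)

/-- Joint positivity of the collection `𝒜`. -/
def JointPositivity {n : ℕ} {Z C : Type} [Fintype Z] [DecidableEq C] (P : Z → ℝ)
    (f : Z → (Fin n → Bool) → C) (𝒜 : Finset (Fin n → Fin n → Bool)) : Prop :=
  ∀ (i : Fin n) (c : C), 0 < pNMR P f 𝒜 i c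

/-- NMR Horvitz–Thompson estimator of `μ(c)`. -/
def muHatNMR {n : ℕ} {Z C : Type} [Fintype Z] [DecidableEq C] (P : Z → ℝ)
    (f : Z → (Fin n → Bool) → C) (𝒜 : Finset (Fin n → Fin n → Bool))
    (Yo : Z → Fin n → ℝ) (c : C) (z : Z) : ℝ :=
  (1 / (n : ℝ)) * ∑ i, indAll f 𝒜 z i c * Yo z i / pNMR P f 𝒜 i c

/-- NMR plug-in estimator of `τ(c, c')`. -/
def tauHatNMR {n : ℕ} {Z C : Type} [Fintype Z] [DecidableEq C] (P : Z → ℝ)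
    (f : Z → (Fin n → Bool) → C) (𝒜 : Finset (Fin n → Fin n → Bool))
    (Yo : Z → Fin n → ℝ) (c c' : C) (z : Z) : ℝ :=
  muHatNMR P f 𝒜 Yo c z - muHatNMR P f 𝒜 Yo c' z

/-- Pairwise joint exposure probability `p_{ij}^𝒜(c, c')`. -/
def pPairNMR {n : ℕ} {Z C : Type} [Fintype Z] [DecidableEq C] (P : Z → ℝ)
    (f : Z → (Fin n → Bool) → C) (𝒜 : Finset (Fin n → Fin n → Bool))
    (i j : Fin n) (c c' : C) : ℝ :=
  expec P (fun z => indAll f 𝒜 z i c * indAll f 𝒜 z j c')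

/-- Variance with respect to the treatment distribution `P`. -/
def varZ {Z : Type} [Fintype Z] (P : Z → ℝ) (g : Z → ℝ) : ℝ :=
  expec P (fun z => (g z - expec P g) ^ 2)

/-- Covariance with respect to the treatment distribution `P`. -/
def covZ {Z : Type} [Fintype Z] (P : Z → ℝ) (g h : Z → ℝ) : ℝ :=
  expec P (fun z => (g z - expec P g) * (h z - expec P h))

/-- Variance estimator for the NMR Horvitz–Thompson estimator `μ̂_𝒜(c)`. -/
def varHatNMR {n : ℕ} {Z C : Type} [Fintype Z] [DecidableEq C] (P : Z → ℝ)
    (f : Z → (Fin n → Bool) → C) (𝒜 : Finset (Fin n → Fin n → Bool))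
    (Yo : Z → Fin n → ℝ) (c : C) (z : Z) : ℝ :=
  (1 / (n : ℝ) ^ 2) * (∑ i, indAll f 𝒜 z i c * (1 - pNMR P f 𝒜 i c) *
      (Yo z i / pNMR P f 𝒜 i c) ^ 2)
  + (1 / (n : ℝ) ^ 2) *
      (∑ i, ∑ j ∈ univ.filter (fun j => j ≠ i ∧ 0 < pPairNMR P f 𝒜 i j c c),
        indAll f 𝒜 z i c * indAll f 𝒜 z j c *
          ((pPairNMR P f 𝒜 i j c c - pNMR P f 𝒜 i c * pNMR P f 𝒜 j c) /
            pPairNMR P f 𝒜 i j c c) *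
          (Yo z i / pNMR P f 𝒜 i c) * (Yo z j / pNMR P f 𝒜 j c))
  + (1 / (n : ℝ) ^ 2) *
      (∑ i, ∑ j ∈ univ.filter (fun j => j ≠ i ∧ pPairNMR P f 𝒜 i j c c = 0),
        (indAll f 𝒜 z i c * (Yo z i) ^ 2 / (2 * pNMR P f 𝒜 i c)
          + indAll f 𝒜 z j c * (Yo z j) ^ 2 / (2 * pNMR P f 𝒜 j c)))

/-- Covariance estimator for the NMR Horvitz–Thompson estimators at levels `ck, cl`. -/
def covHatNMR {n : ℕ} {Z C : Type} [Fintype Z] [DecidableEq C] (P : Z → ℝ)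
    (f : Z → (Fin n → Bool) → C) (𝒜 : Finset (Fin n → Fin n → Bool))
    (Yo : Z → Fin n → ℝ) (ck cl : C) (z : Z) : ℝ :=
  (1 / (n : ℝ) ^ 2) *
      (∑ i, ∑ j ∈ univ.filter (fun j => j ≠ i ∧ 0 < pPairNMR P f 𝒜 i j ck cl),
        indAll f 𝒜 z i ck * indAll f 𝒜 z j cl *
          ((pPairNMR P f 𝒜 i j ck cl - pNMR P f 𝒜 i ck * pNMR P f 𝒜 j cl) /
            pPairNMR P f 𝒜 i j ck cl) *
          (Yo z i / pNMR P f 𝒜 i ck) * (Yo z j / pNMR P f 𝒜 j cl))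
  - (1 / (n : ℝ) ^ 2) *
      (∑ i, ∑ j ∈ univ.filter (fun j => pPairNMR P f 𝒜 i j ck cl = 0),
        (indAll f 𝒜 z i ck * (Yo z i) ^ 2 / (2 * pNMR P f 𝒜 i ck)
          + indAll f 𝒜 z j cl * (Yo z j) ^ 2 / (2 * pNMR P f 𝒜 j cl)))

/-- Variance estimator for the NMR plug-in causal effect estimator `τ̂_𝒜(ck, cl)`. -/
def varHatTauNMR {n : ℕ} {Z C : Type} [Fintype Z] [DecidableEq C] (P : Z → ℝ)
    (f : Z → (Fin n → Bool) → C) (𝒜 : Finset (Fin n → Fin n → Bool))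
    (Yo : Z → Fin n → ℝ) (ck cl : C) (z : Z) : ℝ :=
  varHatNMR P f 𝒜 Yo ck z + varHatNMR P f 𝒜 Yo cl z - 2 * covHatNMR P f 𝒜 Yo ck cl z
section AuxExpec

variable {Z : Type} [Fintype Z] (P : Z → ℝ)

lemma expec_congr {g h : Z → ℝ} (H : ∀ z, g z = h z) : expec P g = expec P h := by
  unfold expec; exact Finset.sum_congr rfl fun z _ => by rw [H z]

lemma expec_add (g h : Z → ℝ) :
    expec P (fun z => g z + h z) = expec P g + expec P h := by
  unfold expec; rw [← Finset.sum_add_distrib]; exact Finset.sum_congr rfl fun z _ => by ring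

lemma expec_sub (g h : Z → ℝ) :
    expec P (fun z => g z - h z) = expec P g - expec P h := by
  unfold expec; rw [← Finset.sum_sub_distrib]; exact Finset.sum_congr rfl fun z _ => by ring

lemma expec_const_mul (c : ℝ) (g : Z → ℝ) :
    expec P (fun z => c * g z) = c * expec P g := by
  unfold expec; rw [Finset.mul_sum]; exact Finset.sum_congr rfl fun z _ => by ring

lemma expec_mul_const (g : Z → ℝ) (c : ℝ) :
    expec P (fun z => g z * c) = expec P g * c := by
  unfold expec; rw [Finset.sum_mul]; exact Finset.sum_congr rfl fun z _ => by ring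

lemma expec_sum {ι : Type*} (s : Finset ι) (g : ι → Z → ℝ) :
    expec P (fun z => ∑ i ∈ s, g i z) = ∑ i ∈ s, expec P (g i) := by
  unfold expec
  rw [Finset.sum_comm]
  exact Finset.sum_congr rfl fun z _ => by rw [Finset.mul_sum]

lemma expec_const (hPsum : ∑ z, P z = 1) (c : ℝ) : expec P (fun _ => c) = c := by
  unfold expec
  rw [← Finset.sum_mul, hPsum, one_mul]

lemma varZ_eq (hPsum : ∑ z, P z = 1) (g : Z → ℝ) :
    varZ P g = expec P (fun z => g z * g z) - expec P g * expec P g := by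
  unfold varZ
  have h1 : ∀ z, (g z - expec P g) ^ 2
      = g z * g z - (2 * expec P g) * g z + expec P g * expec P g := fun z => by ring
  rw [expec_congr P h1]
  rw [expec_add, expec_sub, expec_const_mul, expec_const P hPsum]
  ring

lemma varZ_const_mul (c : ℝ) (g : Z → ℝ) :
    varZ P (fun z => c * g z) = c ^ 2 * varZ P g := by
  unfold varZ
  rw [expec_const_mul]
  have h1 : ∀ z, (c * g z - c * expec P g) ^ 2 = c ^ 2 * (g z - expec P g) ^ 2 :=
    fun z => by ring
  rw [expec_congr P h1, expec_const_mul]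

end AuxExpec

section AuxInd

variable {n : ℕ} {Z C : Type} [Fintype Z] [DecidableEq C]
  (f : Z → (Fin n → Bool) → C) (𝒜 : Finset (Fin n → Fin n → Bool))

lemma indAll_zero_or_one (z : Z) (i : Fin n) (c : C) :
    indAll f 𝒜 z i c = 0 ∨ indAll f 𝒜 z i c = 1 := by
  unfold indAll
  by_cases h : ∀ A ∈ 𝒜, f z (A i) = c
  · right
    exact Finset.prod_eq_one fun A hA => by simp [ind, h A hA]
  · left
    push_neg at h
    obtain ⟨A, hA, hfA⟩ := h
    exact Finset.prod_eq_zero hA (by simp [ind, hfA])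

lemma indAll_nonneg (z : Z) (i : Fin n) (c : C) : 0 ≤ indAll f 𝒜 z i c := by
  rcases indAll_zero_or_one f 𝒜 z i c with h | h <;> rw [h] <;> norm_num

lemma indAll_mul_self (z : Z) (i : Fin n) (c : C) :
    indAll f 𝒜 z i c * indAll f 𝒜 z i c = indAll f 𝒜 z i c := by
  rcases indAll_zero_or_one f 𝒜 z i c with h | h <;> rw [h] <;> norm_num

lemma indAll_eq_one_imp {z : Z} {i : Fin n} {c : C} (h : indAll f 𝒜 z i c = 1)
    {A : Fin n → Fin n → Bool} (hA : A ∈ 𝒜) : f z (A i) = c := by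
  by_contra hne
  have : indAll f 𝒜 z i c = 0 := by
    unfold indAll
    exact Finset.prod_eq_zero hA (by simp [ind, hne])
  rw [this] at h; norm_num at h

lemma pNMR_eq (i : Fin n) (c : C) (P : Z → ℝ) :
    pNMR P f 𝒜 i c = expec P (fun z => indAll f 𝒜 z i c) := rfl

lemma pPairNMR_nonneg (P : Z → ℝ) (hP : ∀ z, 0 ≤ P z) (i j : Fin n) (c c' : C) :
    0 ≤ pPairNMR P f 𝒜 i j c c' := by
  unfold pPairNMR expec
  exact Finset.sum_nonneg fun z _ =>
    mul_nonneg (hP z) (mul_nonneg (indAll_nonneg f 𝒜 z i c) (indAll_nonneg f 𝒜 z j c'))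

lemma pPairNMR_symm (P : Z → ℝ) (i j : Fin n) (c c' : C) :
    pPairNMR P f 𝒜 i j c c' = pPairNMR P f 𝒜 j i c' c := by
  unfold pPairNMR
  exact expec_congr P fun z => by ring

lemma pPairNMR_zero_expec (P : Z → ℝ) (hP : ∀ z, 0 ≤ P z) {i j : Fin n} {c c' : C}
    (h : pPairNMR P f 𝒜 i j c c' = 0) (X : Z → ℝ) :
    expec P (fun z => indAll f 𝒜 z i c * indAll f 𝒜 z j c' * X z) = 0 := by
  unfold pPairNMR expec at h
  unfold expec
  have hz : ∀ z ∈ Finset.univ, P z * (indAll f 𝒜 z i c * indAll f 𝒜 z j c') = 0 := by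
    rw [← Finset.sum_eq_zero_iff_of_nonneg]
    · exact h
    · exact fun z _ => mul_nonneg (hP z)
        (mul_nonneg (indAll_nonneg f 𝒜 z i c) (indAll_nonneg f 𝒜 z j c'))
  refine Finset.sum_eq_zero fun z _ => ?_
  have := hz z (Finset.mem_univ z)
  calc P z * (indAll f 𝒜 z i c * indAll f 𝒜 z j c' * X z)
      = P z * (indAll f 𝒜 z i c * indAll f 𝒜 z j c') * X z := by ring
    _ = 0 := by rw [this, zero_mul]

end AuxInd
lemma double_sum_swap_sub {n : ℕ} (F G : Fin n → Fin n → ℝ) :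
    (∑ i, ∑ j, (F i j - G j i)) = ∑ i, ∑ j, (F i j - G i j) := by
  calc ∑ i, ∑ j, (F i j - G j i)
      = (∑ i, ∑ j, F i j) - (∑ i, ∑ j, G j i) := by
        simp only [← Finset.sum_sub_distrib]
    _ = (∑ i, ∑ j, F i j) - (∑ i, ∑ j, G i j) := by
        congr 1
        exact Finset.sum_comm
    _ = ∑ i, ∑ j, (F i j - G i j) := by
        simp only [← Finset.sum_sub_distrib]

section VarLemma

variable {n : ℕ} {Z C : Type} [Fintype Z] [DecidableEq C]
  (P : Z → ℝ) (f : Z → (Fin n → Bool) → C) (𝒜 : Finset (Fin n → Fin n → Bool))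
  (Yo : Z → Fin n → ℝ) (Yt : Fin n → C → ℝ)

lemma tauHat_rewrite (ck cl : C)
    (hyk : ∀ z i, indAll f 𝒜 z i ck * Yo z i = indAll f 𝒜 z i ck * Yt i ck)
    (hyl : ∀ z i, indAll f 𝒜 z i cl * Yo z i = indAll f 𝒜 z i cl * Yt i cl) :
    (fun z => tauHatNMR P f 𝒜 Yo ck cl z)
      = fun z => (1 / (n : ℝ)) * ∑ i,
          (indAll f 𝒜 z i ck * (Yt i ck / pNMR P f 𝒜 i ck)
            - indAll f 𝒜 z i cl * (Yt i cl / pNMR P f 𝒜 i cl)) := by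
  funext z
  unfold tauHatNMR muHatNMR
  rw [← mul_sub, ← Finset.sum_sub_distrib]
  congr 1
  refine Finset.sum_congr rfl fun i _ => ?_
  rw [hyk z i, hyl z i, mul_div_assoc, mul_div_assoc]

lemma varZ_tauHat (hPsum : ∑ z, P z = 1) (ck cl : C)
    (hyk : ∀ z i, indAll f 𝒜 z i ck * Yo z i = indAll f 𝒜 z i ck * Yt i ck)
    (hyl : ∀ z i, indAll f 𝒜 z i cl * Yo z i = indAll f 𝒜 z i cl * Yt i cl) :
    varZ P (fun z => tauHatNMR P f 𝒜 Yo ck cl z)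
      = (1 / (n : ℝ)) ^ 2 * ∑ i, ∑ j,
          ((pPairNMR P f 𝒜 i j ck ck - pNMR P f 𝒜 i ck * pNMR P f 𝒜 j ck) *
              (Yt i ck / pNMR P f 𝒜 i ck * (Yt j ck / pNMR P f 𝒜 j ck))
            + (pPairNMR P f 𝒜 i j cl cl - pNMR P f 𝒜 i cl * pNMR P f 𝒜 j cl) *
              (Yt i cl / pNMR P f 𝒜 i cl * (Yt j cl / pNMR P f 𝒜 j cl))
            - 2 * ((pPairNMR P f 𝒜 i j ck cl - pNMR P f 𝒜 i ck * pNMR P f 𝒜 j cl) *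
              (Yt i ck / pNMR P f 𝒜 i ck * (Yt j cl / pNMR P f 𝒜 j cl)))) := by
  rw [tauHat_rewrite P f 𝒜 Yo Yt ck cl hyk hyl, varZ_const_mul, varZ_eq P hPsum]
  congr 1
  have hEG : expec P (fun z => ∑ i,
        (indAll f 𝒜 z i ck * (Yt i ck / pNMR P f 𝒜 i ck)
          - indAll f 𝒜 z i cl * (Yt i cl / pNMR P f 𝒜 i cl)))
      = ∑ i, (pNMR P f 𝒜 i ck * (Yt i ck / pNMR P f 𝒜 i ck)
          - pNMR P f 𝒜 i cl * (Yt i cl / pNMR P f 𝒜 i cl)) := by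
    rw [expec_sum]
    refine Finset.sum_congr rfl fun i _ => ?_
    rw [expec_sub, expec_mul_const, expec_mul_const]
    rfl
  have hEG2 : expec P (fun z => (∑ i,
        (indAll f 𝒜 z i ck * (Yt i ck / pNMR P f 𝒜 i ck)
          - indAll f 𝒜 z i cl * (Yt i cl / pNMR P f 𝒜 i cl))) * (∑ i,
        (indAll f 𝒜 z i ck * (Yt i ck / pNMR P f 𝒜 i ck)
          - indAll f 𝒜 z i cl * (Yt i cl / pNMR P f 𝒜 i cl))))
      = ∑ i, ∑ j, (pPairNMR P f 𝒜 i j ck ck *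
            (Yt i ck / pNMR P f 𝒜 i ck * (Yt j ck / pNMR P f 𝒜 j ck))
          - pPairNMR P f 𝒜 i j ck cl *
            (Yt i ck / pNMR P f 𝒜 i ck * (Yt j cl / pNMR P f 𝒜 j cl))
          - pPairNMR P f 𝒜 j i ck cl *
            (Yt j ck / pNMR P f 𝒜 j ck * (Yt i cl / pNMR P f 𝒜 i cl))
          + pPairNMR P f 𝒜 i j cl cl *
            (Yt i cl / pNMR P f 𝒜 i cl * (Yt j cl / pNMR P f 𝒜 j cl))) := by
    have h1 : ∀ z : Z, (∑ i,
        (indAll f 𝒜 z i ck * (Yt i ck / pNMR P f 𝒜 i ck)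
          - indAll f 𝒜 z i cl * (Yt i cl / pNMR P f 𝒜 i cl))) * (∑ i,
        (indAll f 𝒜 z i ck * (Yt i ck / pNMR P f 𝒜 i ck)
          - indAll f 𝒜 z i cl * (Yt i cl / pNMR P f 𝒜 i cl)))
        = ∑ i, ∑ j,
          ((indAll f 𝒜 z i ck * indAll f 𝒜 z j ck) *
            (Yt i ck / pNMR P f 𝒜 i ck * (Yt j ck / pNMR P f 𝒜 j ck))
          - (indAll f 𝒜 z i ck * indAll f 𝒜 z j cl) *
            (Yt i ck / pNMR P f 𝒜 i ck * (Yt j cl / pNMR P f 𝒜 j cl))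
          - (indAll f 𝒜 z j ck * indAll f 𝒜 z i cl) *
            (Yt j ck / pNMR P f 𝒜 j ck * (Yt i cl / pNMR P f 𝒜 i cl))
          + (indAll f 𝒜 z i cl * indAll f 𝒜 z j cl) *
            (Yt i cl / pNMR P f 𝒜 i cl * (Yt j cl / pNMR P f 𝒜 j cl))) := by
      intro z
      rw [Finset.sum_mul_sum]
      refine Finset.sum_congr rfl fun i _ => Finset.sum_congr rfl fun j _ => ?_
      ring
    rw [expec_congr P h1, expec_sum]
    refine Finset.sum_congr rfl fun i _ => ?_
    rw [expec_sum]
    refine Finset.sum_congr rfl fun j _ => ?_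
    rw [expec_add, expec_sub, expec_sub,
      expec_mul_const, expec_mul_const, expec_mul_const, expec_mul_const]
    rfl
  rw [hEG2, hEG, Finset.sum_mul_sum]
  simp only [← Finset.sum_sub_distrib]
  calc (∑ i, ∑ j, ((pPairNMR P f 𝒜 i j ck ck *
            (Yt i ck / pNMR P f 𝒜 i ck * (Yt j ck / pNMR P f 𝒜 j ck))
          - pPairNMR P f 𝒜 i j ck cl *
            (Yt i ck / pNMR P f 𝒜 i ck * (Yt j cl / pNMR P f 𝒜 j cl))
          - pPairNMR P f 𝒜 j i ck cl *
            (Yt j ck / pNMR P f 𝒜 j ck * (Yt i cl / pNMR P f 𝒜 i cl))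
          + pPairNMR P f 𝒜 i j cl cl *
            (Yt i cl / pNMR P f 𝒜 i cl * (Yt j cl / pNMR P f 𝒜 j cl)))
        - (pNMR P f 𝒜 i ck * (Yt i ck / pNMR P f 𝒜 i ck)
            - pNMR P f 𝒜 i cl * (Yt i cl / pNMR P f 𝒜 i cl)) *
          (pNMR P f 𝒜 j ck * (Yt j ck / pNMR P f 𝒜 j ck)
            - pNMR P f 𝒜 j cl * (Yt j cl / pNMR P f 𝒜 j cl))))
      = ∑ i, ∑ j,
          ((((pPairNMR P f 𝒜 i j ck ck - pNMR P f 𝒜 i ck * pNMR P f 𝒜 j ck) *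
              (Yt i ck / pNMR P f 𝒜 i ck * (Yt j ck / pNMR P f 𝒜 j ck))
            + (pPairNMR P f 𝒜 i j cl cl - pNMR P f 𝒜 i cl * pNMR P f 𝒜 j cl) *
              (Yt i cl / pNMR P f 𝒜 i cl * (Yt j cl / pNMR P f 𝒜 j cl))
            - (pPairNMR P f 𝒜 i j ck cl - pNMR P f 𝒜 i ck * pNMR P f 𝒜 j cl) *
              (Yt i ck / pNMR P f 𝒜 i ck * (Yt j cl / pNMR P f 𝒜 j cl)))
            - (pPairNMR P f 𝒜 j i ck cl - pNMR P f 𝒜 j ck * pNMR P f 𝒜 i cl) *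
              (Yt j ck / pNMR P f 𝒜 j ck * (Yt i cl / pNMR P f 𝒜 i cl)))) := by
        refine Finset.sum_congr rfl fun i _ => Finset.sum_congr rfl fun j _ => ?_
        ring
    _ = ∑ i, ∑ j,
          ((((pPairNMR P f 𝒜 i j ck ck - pNMR P f 𝒜 i ck * pNMR P f 𝒜 j ck) *
              (Yt i ck / pNMR P f 𝒜 i ck * (Yt j ck / pNMR P f 𝒜 j ck))
            + (pPairNMR P f 𝒜 i j cl cl - pNMR P f 𝒜 i cl * pNMR P f 𝒜 j cl) *
              (Yt i cl / pNMR P f 𝒜 i cl * (Yt j cl / pNMR P f 𝒜 j cl))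
            - (pPairNMR P f 𝒜 i j ck cl - pNMR P f 𝒜 i ck * pNMR P f 𝒜 j cl) *
              (Yt i ck / pNMR P f 𝒜 i ck * (Yt j cl / pNMR P f 𝒜 j cl)))
            - (pPairNMR P f 𝒜 i j ck cl - pNMR P f 𝒜 i ck * pNMR P f 𝒜 j cl) *
              (Yt i ck / pNMR P f 𝒜 i ck * (Yt j cl / pNMR P f 𝒜 j cl)))) :=
        double_sum_swap_sub _ _
    _ = ∑ i, ∑ j,
          ((pPairNMR P f 𝒜 i j ck ck - pNMR P f 𝒜 i ck * pNMR P f 𝒜 j ck) *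
              (Yt i ck / pNMR P f 𝒜 i ck * (Yt j ck / pNMR P f 𝒜 j ck))
            + (pPairNMR P f 𝒜 i j cl cl - pNMR P f 𝒜 i cl * pNMR P f 𝒜 j cl) *
              (Yt i cl / pNMR P f 𝒜 i cl * (Yt j cl / pNMR P f 𝒜 j cl))
            - 2 * ((pPairNMR P f 𝒜 i j ck cl - pNMR P f 𝒜 i ck * pNMR P f 𝒜 j cl) *
              (Yt i ck / pNMR P f 𝒜 i ck * (Yt j cl / pNMR P f 𝒜 j cl)))) := by
        refine Finset.sum_congr rfl fun i _ => Finset.sum_congr rfl fun j _ => ?_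
        ring

end VarLemma
section ExpLemma

variable {n : ℕ} {Z C : Type} [Fintype Z] [DecidableEq C]
  (P : Z → ℝ) (f : Z → (Fin n → Bool) → C) (𝒜 : Finset (Fin n → Fin n → Bool))
  (Yo : Z → Fin n → ℝ) (Yt : Fin n → C → ℝ)

lemma expec_varHat (c : C)
    (hq : ∀ i, 0 < pNMR P f 𝒜 i c)
    (hy : ∀ z i, indAll f 𝒜 z i c * Yo z i = indAll f 𝒜 z i c * Yt i c) :
    expec P (fun z => varHatNMR P f 𝒜 Yo c z)
      = (1 / (n : ℝ) ^ 2) * ∑ i, ∑ j,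
          ((if j = i then
              pNMR P f 𝒜 i c * ((1 - pNMR P f 𝒜 i c) * (Yt i c / pNMR P f 𝒜 i c) ^ 2)
            else 0)
          + (if j ≠ i ∧ 0 < pPairNMR P f 𝒜 i j c c then
              (pPairNMR P f 𝒜 i j c c - pNMR P f 𝒜 i c * pNMR P f 𝒜 j c) *
                (Yt i c / pNMR P f 𝒜 i c * (Yt j c / pNMR P f 𝒜 j c))
            else 0)
          + (if j ≠ i ∧ pPairNMR P f 𝒜 i j c c = 0 then
              Yt i c ^ 2 / 2 + Yt j c ^ 2 / 2
            else 0)) := by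
  unfold varHatNMR
  rw [expec_add, expec_add, expec_const_mul, expec_const_mul, expec_const_mul]
  have eS1 : expec P (fun z => ∑ i, indAll f 𝒜 z i c * (1 - pNMR P f 𝒜 i c) *
        (Yo z i / pNMR P f 𝒜 i c) ^ 2)
      = ∑ i, pNMR P f 𝒜 i c * ((1 - pNMR P f 𝒜 i c) * (Yt i c / pNMR P f 𝒜 i c) ^ 2) := by
    rw [expec_sum]
    refine Finset.sum_congr rfl fun i _ => ?_
    have hpt : ∀ z, indAll f 𝒜 z i c * (1 - pNMR P f 𝒜 i c) * (Yo z i / pNMR P f 𝒜 i c) ^ 2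
        = indAll f 𝒜 z i c * ((1 - pNMR P f 𝒜 i c) * (Yt i c / pNMR P f 𝒜 i c) ^ 2) := by
      intro z
      rcases indAll_zero_or_one f 𝒜 z i c with h | h
      · rw [h]; ring
      · have e : Yo z i = Yt i c := by have := hy z i; rwa [h, one_mul, one_mul] at this
        rw [e]; ring
    rw [expec_congr P hpt, expec_mul_const]
    rfl
  have eS2 : expec P (fun z => ∑ i,
        ∑ j ∈ Finset.univ.filter (fun j => j ≠ i ∧ 0 < pPairNMR P f 𝒜 i j c c),
          indAll f 𝒜 z i c * indAll f 𝒜 z j c *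
            ((pPairNMR P f 𝒜 i j c c - pNMR P f 𝒜 i c * pNMR P f 𝒜 j c) /
              pPairNMR P f 𝒜 i j c c) *
            (Yo z i / pNMR P f 𝒜 i c) * (Yo z j / pNMR P f 𝒜 j c))
      = ∑ i, ∑ j ∈ Finset.univ.filter (fun j => j ≠ i ∧ 0 < pPairNMR P f 𝒜 i j c c),
          (pPairNMR P f 𝒜 i j c c - pNMR P f 𝒜 i c * pNMR P f 𝒜 j c) *
            (Yt i c / pNMR P f 𝒜 i c * (Yt j c / pNMR P f 𝒜 j c)) := by
    rw [expec_sum]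
    refine Finset.sum_congr rfl fun i _ => ?_
    rw [expec_sum]
    refine Finset.sum_congr rfl fun j hj => ?_
    rw [Finset.mem_filter] at hj
    have hr : pPairNMR P f 𝒜 i j c c ≠ 0 := ne_of_gt hj.2.2
    have hpt : ∀ z, indAll f 𝒜 z i c * indAll f 𝒜 z j c *
          ((pPairNMR P f 𝒜 i j c c - pNMR P f 𝒜 i c * pNMR P f 𝒜 j c) /
            pPairNMR P f 𝒜 i j c c) *
          (Yo z i / pNMR P f 𝒜 i c) * (Yo z j / pNMR P f 𝒜 j c)
        = indAll f 𝒜 z i c * indAll f 𝒜 z j c *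
          (((pPairNMR P f 𝒜 i j c c - pNMR P f 𝒜 i c * pNMR P f 𝒜 j c) /
            pPairNMR P f 𝒜 i j c c) *
          (Yt i c / pNMR P f 𝒜 i c) * (Yt j c / pNMR P f 𝒜 j c)) := by
      intro z
      rcases indAll_zero_or_one f 𝒜 z i c with h1 | h1
      · rw [h1]; ring
      rcases indAll_zero_or_one f 𝒜 z j c with h2 | h2
      · rw [h2]; ring
      have e1 : Yo z i = Yt i c := by have := hy z i; rwa [h1, one_mul, one_mul] at this
      have e2 : Yo z j = Yt j c := by have := hy z j; rwa [h2, one_mul, one_mul] at this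
      rw [e1, e2]; ring
    rw [expec_congr P hpt, expec_mul_const]
    have : expec P (fun z => indAll f 𝒜 z i c * indAll f 𝒜 z j c)
        = pPairNMR P f 𝒜 i j c c := rfl
    rw [this]
    have hinv : pPairNMR P f 𝒜 i j c c * (pPairNMR P f 𝒜 i j c c)⁻¹ = 1 :=
      mul_inv_cancel₀ hr
    linear_combination ((pPairNMR P f 𝒜 i j c c - pNMR P f 𝒜 i c * pNMR P f 𝒜 j c) *
      (Yt i c / pNMR P f 𝒜 i c) * (Yt j c / pNMR P f 𝒜 j c)) * hinv
  have eS3 : expec P (fun z => ∑ i,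
        ∑ j ∈ Finset.univ.filter (fun j => j ≠ i ∧ pPairNMR P f 𝒜 i j c c = 0),
          (indAll f 𝒜 z i c * Yo z i ^ 2 / (2 * pNMR P f 𝒜 i c)
            + indAll f 𝒜 z j c * Yo z j ^ 2 / (2 * pNMR P f 𝒜 j c)))
      = ∑ i, ∑ j ∈ Finset.univ.filter (fun j => j ≠ i ∧ pPairNMR P f 𝒜 i j c c = 0),
          (Yt i c ^ 2 / 2 + Yt j c ^ 2 / 2) := by
    rw [expec_sum]
    refine Finset.sum_congr rfl fun i _ => ?_
    rw [expec_sum]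
    refine Finset.sum_congr rfl fun j _ => ?_
    have hpt : ∀ z, indAll f 𝒜 z i c * Yo z i ^ 2 / (2 * pNMR P f 𝒜 i c)
          + indAll f 𝒜 z j c * Yo z j ^ 2 / (2 * pNMR P f 𝒜 j c)
        = indAll f 𝒜 z i c * (Yt i c ^ 2 / (2 * pNMR P f 𝒜 i c))
          + indAll f 𝒜 z j c * (Yt j c ^ 2 / (2 * pNMR P f 𝒜 j c)) := by
      intro z
      have g1 : indAll f 𝒜 z i c * Yo z i ^ 2 / (2 * pNMR P f 𝒜 i c)
          = indAll f 𝒜 z i c * (Yt i c ^ 2 / (2 * pNMR P f 𝒜 i c)) := by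
        rcases indAll_zero_or_one f 𝒜 z i c with h | h
        · rw [h]; ring
        · have e : Yo z i = Yt i c := by have := hy z i; rwa [h, one_mul, one_mul] at this
          rw [e]; ring
      have g2 : indAll f 𝒜 z j c * Yo z j ^ 2 / (2 * pNMR P f 𝒜 j c)
          = indAll f 𝒜 z j c * (Yt j c ^ 2 / (2 * pNMR P f 𝒜 j c)) := by
        rcases indAll_zero_or_one f 𝒜 z j c with h | h
        · rw [h]; ring
        · have e : Yo z j = Yt j c := by have := hy z j; rwa [h, one_mul, one_mul] at this
          rw [e]; ring
      rw [g1, g2]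
    rw [expec_congr P hpt, expec_add, expec_mul_const, expec_mul_const]
    have h1 : expec P (fun z => indAll f 𝒜 z i c) = pNMR P f 𝒜 i c := rfl
    have h2 : expec P (fun z => indAll f 𝒜 z j c) = pNMR P f 𝒜 j c := rfl
    rw [h1, h2]
    have hinv1 : pNMR P f 𝒜 i c * (pNMR P f 𝒜 i c)⁻¹ = 1 := mul_inv_cancel₀ (hq i).ne'
    have hinv2 : pNMR P f 𝒜 j c * (pNMR P f 𝒜 j c)⁻¹ = 1 := mul_inv_cancel₀ (hq j).ne'
    linear_combination (Yt i c ^ 2 / 2) * hinv1 + (Yt j c ^ 2 / 2) * hinv2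
  rw [eS1, eS2, eS3]
  have t1 : (∑ i, pNMR P f 𝒜 i c * ((1 - pNMR P f 𝒜 i c) * (Yt i c / pNMR P f 𝒜 i c) ^ 2))
      = ∑ i, ∑ j, (if j = i then
          pNMR P f 𝒜 i c * ((1 - pNMR P f 𝒜 i c) * (Yt i c / pNMR P f 𝒜 i c) ^ 2) else 0) := by
    refine Finset.sum_congr rfl fun i _ => ?_
    rw [Finset.sum_ite_eq' Finset.univ i]
    simp
  have t2 : (∑ i, ∑ j ∈ Finset.univ.filter (fun j => j ≠ i ∧ 0 < pPairNMR P f 𝒜 i j c c),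
          (pPairNMR P f 𝒜 i j c c - pNMR P f 𝒜 i c * pNMR P f 𝒜 j c) *
            (Yt i c / pNMR P f 𝒜 i c * (Yt j c / pNMR P f 𝒜 j c)))
      = ∑ i, ∑ j, (if j ≠ i ∧ 0 < pPairNMR P f 𝒜 i j c c then
          (pPairNMR P f 𝒜 i j c c - pNMR P f 𝒜 i c * pNMR P f 𝒜 j c) *
            (Yt i c / pNMR P f 𝒜 i c * (Yt j c / pNMR P f 𝒜 j c)) else 0) :=
    Finset.sum_congr rfl fun i _ => Finset.sum_filter _ _
  have t3 : (∑ i, ∑ j ∈ Finset.univ.filter (fun j => j ≠ i ∧ pPairNMR P f 𝒜 i j c c = 0),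
          (Yt i c ^ 2 / 2 + Yt j c ^ 2 / 2))
      = ∑ i, ∑ j, (if j ≠ i ∧ pPairNMR P f 𝒜 i j c c = 0 then
          Yt i c ^ 2 / 2 + Yt j c ^ 2 / 2 else 0) :=
    Finset.sum_congr rfl fun i _ => Finset.sum_filter _ _
  rw [t1, t2, t3, ← mul_add, ← mul_add]
  congr 1
  simp only [← Finset.sum_add_distrib]

end ExpLemma
section ExpLemma2

variable {n : ℕ} {Z C : Type} [Fintype Z] [DecidableEq C]
  (P : Z → ℝ) (f : Z → (Fin n → Bool) → C) (𝒜 : Finset (Fin n → Fin n → Bool))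
  (Yo : Z → Fin n → ℝ) (Yt : Fin n → C → ℝ)

lemma expec_covHat (ck cl : C)
    (hqk : ∀ i, 0 < pNMR P f 𝒜 i ck) (hql : ∀ i, 0 < pNMR P f 𝒜 i cl)
    (hyk : ∀ z i, indAll f 𝒜 z i ck * Yo z i = indAll f 𝒜 z i ck * Yt i ck)
    (hyl : ∀ z i, indAll f 𝒜 z i cl * Yo z i = indAll f 𝒜 z i cl * Yt i cl) :
    expec P (fun z => covHatNMR P f 𝒜 Yo ck cl z)
      = (1 / (n : ℝ) ^ 2) * ∑ i, ∑ j,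
          ((if j ≠ i ∧ 0 < pPairNMR P f 𝒜 i j ck cl then
              (pPairNMR P f 𝒜 i j ck cl - pNMR P f 𝒜 i ck * pNMR P f 𝒜 j cl) *
                (Yt i ck / pNMR P f 𝒜 i ck * (Yt j cl / pNMR P f 𝒜 j cl))
            else 0)
          - (if pPairNMR P f 𝒜 i j ck cl = 0 then
              Yt i ck ^ 2 / 2 + Yt j cl ^ 2 / 2
            else 0)) := by
  unfold covHatNMR
  rw [expec_sub, expec_const_mul, expec_const_mul]
  have eT1 : expec P (fun z => ∑ i,
        ∑ j ∈ Finset.univ.filter (fun j => j ≠ i ∧ 0 < pPairNMR P f 𝒜 i j ck cl),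
          indAll f 𝒜 z i ck * indAll f 𝒜 z j cl *
            ((pPairNMR P f 𝒜 i j ck cl - pNMR P f 𝒜 i ck * pNMR P f 𝒜 j cl) /
              pPairNMR P f 𝒜 i j ck cl) *
            (Yo z i / pNMR P f 𝒜 i ck) * (Yo z j / pNMR P f 𝒜 j cl))
      = ∑ i, ∑ j ∈ Finset.univ.filter (fun j => j ≠ i ∧ 0 < pPairNMR P f 𝒜 i j ck cl),
          (pPairNMR P f 𝒜 i j ck cl - pNMR P f 𝒜 i ck * pNMR P f 𝒜 j cl) *
            (Yt i ck / pNMR P f 𝒜 i ck * (Yt j cl / pNMR P f 𝒜 j cl)) := by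
    rw [expec_sum]
    refine Finset.sum_congr rfl fun i _ => ?_
    rw [expec_sum]
    refine Finset.sum_congr rfl fun j hj => ?_
    rw [Finset.mem_filter] at hj
    have hr : pPairNMR P f 𝒜 i j ck cl ≠ 0 := ne_of_gt hj.2.2
    have hpt : ∀ z, indAll f 𝒜 z i ck * indAll f 𝒜 z j cl *
          ((pPairNMR P f 𝒜 i j ck cl - pNMR P f 𝒜 i ck * pNMR P f 𝒜 j cl) /
            pPairNMR P f 𝒜 i j ck cl) *
          (Yo z i / pNMR P f 𝒜 i ck) * (Yo z j / pNMR P f 𝒜 j cl)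
        = indAll f 𝒜 z i ck * indAll f 𝒜 z j cl *
          (((pPairNMR P f 𝒜 i j ck cl - pNMR P f 𝒜 i ck * pNMR P f 𝒜 j cl) /
            pPairNMR P f 𝒜 i j ck cl) *
          (Yt i ck / pNMR P f 𝒜 i ck) * (Yt j cl / pNMR P f 𝒜 j cl)) := by
      intro z
      rcases indAll_zero_or_one f 𝒜 z i ck with h1 | h1
      · rw [h1]; ring
      rcases indAll_zero_or_one f 𝒜 z j cl with h2 | h2
      · rw [h2]; ring
      have e1 : Yo z i = Yt i ck := by have := hyk z i; rwa [h1, one_mul, one_mul] at this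
      have e2 : Yo z j = Yt j cl := by have := hyl z j; rwa [h2, one_mul, one_mul] at this
      rw [e1, e2]; ring
    rw [expec_congr P hpt, expec_mul_const]
    have : expec P (fun z => indAll f 𝒜 z i ck * indAll f 𝒜 z j cl)
        = pPairNMR P f 𝒜 i j ck cl := rfl
    rw [this]
    have hinv : pPairNMR P f 𝒜 i j ck cl * (pPairNMR P f 𝒜 i j ck cl)⁻¹ = 1 :=
      mul_inv_cancel₀ hr
    linear_combination ((pPairNMR P f 𝒜 i j ck cl - pNMR P f 𝒜 i ck * pNMR P f 𝒜 j cl) *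
      (Yt i ck / pNMR P f 𝒜 i ck) * (Yt j cl / pNMR P f 𝒜 j cl)) * hinv
  have eT2 : expec P (fun z => ∑ i,
        ∑ j ∈ Finset.univ.filter (fun j => pPairNMR P f 𝒜 i j ck cl = 0),
          (indAll f 𝒜 z i ck * Yo z i ^ 2 / (2 * pNMR P f 𝒜 i ck)
            + indAll f 𝒜 z j cl * Yo z j ^ 2 / (2 * pNMR P f 𝒜 j cl)))
      = ∑ i, ∑ j ∈ Finset.univ.filter (fun j => pPairNMR P f 𝒜 i j ck cl = 0),
          (Yt i ck ^ 2 / 2 + Yt j cl ^ 2 / 2) := by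
    rw [expec_sum]
    refine Finset.sum_congr rfl fun i _ => ?_
    rw [expec_sum]
    refine Finset.sum_congr rfl fun j _ => ?_
    have hpt : ∀ z, indAll f 𝒜 z i ck * Yo z i ^ 2 / (2 * pNMR P f 𝒜 i ck)
          + indAll f 𝒜 z j cl * Yo z j ^ 2 / (2 * pNMR P f 𝒜 j cl)
        = indAll f 𝒜 z i ck * (Yt i ck ^ 2 / (2 * pNMR P f 𝒜 i ck))
          + indAll f 𝒜 z j cl * (Yt j cl ^ 2 / (2 * pNMR P f 𝒜 j cl)) := by
      intro z
      have g1 : indAll f 𝒜 z i ck * Yo z i ^ 2 / (2 * pNMR P f 𝒜 i ck)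
          = indAll f 𝒜 z i ck * (Yt i ck ^ 2 / (2 * pNMR P f 𝒜 i ck)) := by
        rcases indAll_zero_or_one f 𝒜 z i ck with h | h
        · rw [h]; ring
        · have e : Yo z i = Yt i ck := by have := hyk z i; rwa [h, one_mul, one_mul] at this
          rw [e]; ring
      have g2 : indAll f 𝒜 z j cl * Yo z j ^ 2 / (2 * pNMR P f 𝒜 j cl)
          = indAll f 𝒜 z j cl * (Yt j cl ^ 2 / (2 * pNMR P f 𝒜 j cl)) := by
        rcases indAll_zero_or_one f 𝒜 z j cl with h | h
        · rw [h]; ring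
        · have e : Yo z j = Yt j cl := by have := hyl z j; rwa [h, one_mul, one_mul] at this
          rw [e]; ring
      rw [g1, g2]
    rw [expec_congr P hpt, expec_add, expec_mul_const, expec_mul_const]
    have h1 : expec P (fun z => indAll f 𝒜 z i ck) = pNMR P f 𝒜 i ck := rfl
    have h2 : expec P (fun z => indAll f 𝒜 z j cl) = pNMR P f 𝒜 j cl := rfl
    rw [h1, h2]
    have hinv1 : pNMR P f 𝒜 i ck * (pNMR P f 𝒜 i ck)⁻¹ = 1 := mul_inv_cancel₀ (hqk i).ne'
    have hinv2 : pNMR P f 𝒜 j cl * (pNMR P f 𝒜 j cl)⁻¹ = 1 := mul_inv_cancel₀ (hql j).ne'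
    linear_combination (Yt i ck ^ 2 / 2) * hinv1 + (Yt j cl ^ 2 / 2) * hinv2
  rw [eT1, eT2]
  have t1 : (∑ i, ∑ j ∈ Finset.univ.filter (fun j => j ≠ i ∧ 0 < pPairNMR P f 𝒜 i j ck cl),
          (pPairNMR P f 𝒜 i j ck cl - pNMR P f 𝒜 i ck * pNMR P f 𝒜 j cl) *
            (Yt i ck / pNMR P f 𝒜 i ck * (Yt j cl / pNMR P f 𝒜 j cl)))
      = ∑ i, ∑ j, (if j ≠ i ∧ 0 < pPairNMR P f 𝒜 i j ck cl then
          (pPairNMR P f 𝒜 i j ck cl - pNMR P f 𝒜 i ck * pNMR P f 𝒜 j cl) *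
            (Yt i ck / pNMR P f 𝒜 i ck * (Yt j cl / pNMR P f 𝒜 j cl)) else 0) :=
    Finset.sum_congr rfl fun i _ => Finset.sum_filter _ _
  have t2 : (∑ i, ∑ j ∈ Finset.univ.filter (fun j => pPairNMR P f 𝒜 i j ck cl = 0),
          (Yt i ck ^ 2 / 2 + Yt j cl ^ 2 / 2))
      = ∑ i, ∑ j, (if pPairNMR P f 𝒜 i j ck cl = 0 then
          Yt i ck ^ 2 / 2 + Yt j cl ^ 2 / 2 else 0) :=
    Finset.sum_congr rfl fun i _ => Finset.sum_filter _ _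
  rw [t1, t2, ← mul_sub]
  congr 1
  simp only [← Finset.sum_sub_distrib]

end ExpLemma2
lemma assemble {n : ℕ} (c : ℝ) (hc : 0 ≤ c) (W Vk Vl Cw : Fin n → Fin n → ℝ)
    (h : ∀ i j, W i j ≤ Vk i j + Vl i j - 2 * Cw i j) :
    c * (∑ i, ∑ j, W i j) ≤
      c * (∑ i, ∑ j, Vk i j) + c * (∑ i, ∑ j, Vl i j) - 2 * (c * (∑ i, ∑ j, Cw i j)) := by
  have h1 : (∑ i, ∑ j, W i j) ≤ ∑ i, ∑ j, (Vk i j + Vl i j - 2 * Cw i j) :=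
    Finset.sum_le_sum fun i _ => Finset.sum_le_sum fun j _ => h i j
  have h2 : ∑ i : Fin n, ∑ j, (Vk i j + Vl i j - 2 * Cw i j)
      = ((∑ i, ∑ j, Vk i j) + ∑ i, ∑ j, Vl i j) - ∑ i, ∑ j, 2 * Cw i j := by
    simp only [Finset.sum_add_distrib, Finset.sum_sub_distrib]
  have h3 : ∑ i : Fin n, ∑ j, 2 * Cw i j = 2 * ∑ i, ∑ j, Cw i j := by
    simp only [← Finset.mul_sum]
  have h4 := mul_le_mul_of_nonneg_left h1 hc
  rw [h2, h3] at h4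
  linarith

section PairIneq

variable {n : ℕ} {Z C : Type} [Fintype Z] [DecidableEq C]
  (P : Z → ℝ) (f : Z → (Fin n → Bool) → C) (𝒜 : Finset (Fin n → Fin n → Bool))
  (Yt : Fin n → C → ℝ)

lemma pair_ineq (ck cl : C)
    (hqk : ∀ i, 0 < pNMR P f 𝒜 i ck) (hql : ∀ i, 0 < pNMR P f 𝒜 i cl)
    (hrkk : ∀ i j, 0 ≤ pPairNMR P f 𝒜 i j ck ck)
    (hrll : ∀ i j, 0 ≤ pPairNMR P f 𝒜 i j cl cl)
    (hrkl : ∀ i j, 0 ≤ pPairNMR P f 𝒜 i j ck cl)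
    (hdkk : ∀ i, pPairNMR P f 𝒜 i i ck ck = pNMR P f 𝒜 i ck)
    (hdll : ∀ i, pPairNMR P f 𝒜 i i cl cl = pNMR P f 𝒜 i cl)
    (hdkl : ∀ i, pPairNMR P f 𝒜 i i ck cl = 0)
    (i j : Fin n) :
    ((pPairNMR P f 𝒜 i j ck ck - pNMR P f 𝒜 i ck * pNMR P f 𝒜 j ck) *
        (Yt i ck / pNMR P f 𝒜 i ck * (Yt j ck / pNMR P f 𝒜 j ck))
      + (pPairNMR P f 𝒜 i j cl cl - pNMR P f 𝒜 i cl * pNMR P f 𝒜 j cl) *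
        (Yt i cl / pNMR P f 𝒜 i cl * (Yt j cl / pNMR P f 𝒜 j cl))
      - 2 * ((pPairNMR P f 𝒜 i j ck cl - pNMR P f 𝒜 i ck * pNMR P f 𝒜 j cl) *
        (Yt i ck / pNMR P f 𝒜 i ck * (Yt j cl / pNMR P f 𝒜 j cl))))
    ≤ ((if j = i then
          pNMR P f 𝒜 i ck * ((1 - pNMR P f 𝒜 i ck) * (Yt i ck / pNMR P f 𝒜 i ck) ^ 2)
        else 0)
      + (if j ≠ i ∧ 0 < pPairNMR P f 𝒜 i j ck ck then
          (pPairNMR P f 𝒜 i j ck ck - pNMR P f 𝒜 i ck * pNMR P f 𝒜 j ck) *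
            (Yt i ck / pNMR P f 𝒜 i ck * (Yt j ck / pNMR P f 𝒜 j ck))
        else 0)
      + (if j ≠ i ∧ pPairNMR P f 𝒜 i j ck ck = 0 then
          Yt i ck ^ 2 / 2 + Yt j ck ^ 2 / 2
        else 0))
    + ((if j = i then
          pNMR P f 𝒜 i cl * ((1 - pNMR P f 𝒜 i cl) * (Yt i cl / pNMR P f 𝒜 i cl) ^ 2)
        else 0)
      + (if j ≠ i ∧ 0 < pPairNMR P f 𝒜 i j cl cl then
          (pPairNMR P f 𝒜 i j cl cl - pNMR P f 𝒜 i cl * pNMR P f 𝒜 j cl) *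
            (Yt i cl / pNMR P f 𝒜 i cl * (Yt j cl / pNMR P f 𝒜 j cl))
        else 0)
      + (if j ≠ i ∧ pPairNMR P f 𝒜 i j cl cl = 0 then
          Yt i cl ^ 2 / 2 + Yt j cl ^ 2 / 2
        else 0))
    - 2 * ((if j ≠ i ∧ 0 < pPairNMR P f 𝒜 i j ck cl then
          (pPairNMR P f 𝒜 i j ck cl - pNMR P f 𝒜 i ck * pNMR P f 𝒜 j cl) *
            (Yt i ck / pNMR P f 𝒜 i ck * (Yt j cl / pNMR P f 𝒜 j cl))
        else 0)
      - (if pPairNMR P f 𝒜 i j ck cl = 0 then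
          Yt i ck ^ 2 / 2 + Yt j cl ^ 2 / 2
        else 0)) := by
  have hki : pNMR P f 𝒜 i ck ≠ 0 := (hqk i).ne'
  have hkj : pNMR P f 𝒜 j ck ≠ 0 := (hqk j).ne'
  have hli : pNMR P f 𝒜 i cl ≠ 0 := (hql i).ne'
  have hlj : pNMR P f 𝒜 j cl ≠ 0 := (hql j).ne'
  rcases eq_or_ne j i with hij | hij
  · subst hij
    have c1 : ¬(j ≠ j ∧ 0 < pPairNMR P f 𝒜 j j ck ck) := by simp
    have c2 : ¬(j ≠ j ∧ pPairNMR P f 𝒜 j j ck ck = 0) := by simp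
    have c3 : ¬(j ≠ j ∧ 0 < pPairNMR P f 𝒜 j j cl cl) := by simp
    have c4 : ¬(j ≠ j ∧ pPairNMR P f 𝒜 j j cl cl = 0) := by simp
    have c5 : ¬(j ≠ j ∧ 0 < pPairNMR P f 𝒜 j j ck cl) := by simp
    rw [if_pos rfl, if_pos rfl, if_neg c1, if_neg c2, if_neg c3, if_neg c4, if_neg c5,
      if_pos (hdkl j), hdkk j, hdll j, hdkl j]
    have key : pNMR P f 𝒜 j ck * pNMR P f 𝒜 j cl *
        (Yt j ck / pNMR P f 𝒜 j ck * (Yt j cl / pNMR P f 𝒜 j cl))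
        = Yt j ck * Yt j cl := by
      field_simp
    nlinarith [key, sq_nonneg (Yt j ck - Yt j cl)]
  · rw [if_neg hij, if_neg hij]
    have Hkk : (pPairNMR P f 𝒜 i j ck ck - pNMR P f 𝒜 i ck * pNMR P f 𝒜 j ck) *
          (Yt i ck / pNMR P f 𝒜 i ck * (Yt j ck / pNMR P f 𝒜 j ck))
        ≤ (if j ≠ i ∧ 0 < pPairNMR P f 𝒜 i j ck ck then
            (pPairNMR P f 𝒜 i j ck ck - pNMR P f 𝒜 i ck * pNMR P f 𝒜 j ck) *
              (Yt i ck / pNMR P f 𝒜 i ck * (Yt j ck / pNMR P f 𝒜 j ck))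
          else 0)
        + (if j ≠ i ∧ pPairNMR P f 𝒜 i j ck ck = 0 then
            Yt i ck ^ 2 / 2 + Yt j ck ^ 2 / 2 else 0) := by
      rcases (hrkk i j).lt_or_eq with hpos | h0
      · rw [if_pos ⟨hij, hpos⟩, if_neg (fun h => hpos.ne' h.2)]
        linarith
      · rw [if_neg (fun h => lt_irrefl _ (h0 ▸ h.2)), if_pos ⟨hij, h0.symm⟩, ← h0]
        have key : pNMR P f 𝒜 i ck * pNMR P f 𝒜 j ck *
            (Yt i ck / pNMR P f 𝒜 i ck * (Yt j ck / pNMR P f 𝒜 j ck))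
            = Yt i ck * Yt j ck := by field_simp
        nlinarith [key, sq_nonneg (Yt i ck + Yt j ck)]
    have Hll : (pPairNMR P f 𝒜 i j cl cl - pNMR P f 𝒜 i cl * pNMR P f 𝒜 j cl) *
          (Yt i cl / pNMR P f 𝒜 i cl * (Yt j cl / pNMR P f 𝒜 j cl))
        ≤ (if j ≠ i ∧ 0 < pPairNMR P f 𝒜 i j cl cl then
            (pPairNMR P f 𝒜 i j cl cl - pNMR P f 𝒜 i cl * pNMR P f 𝒜 j cl) *
              (Yt i cl / pNMR P f 𝒜 i cl * (Yt j cl / pNMR P f 𝒜 j cl))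
          else 0)
        + (if j ≠ i ∧ pPairNMR P f 𝒜 i j cl cl = 0 then
            Yt i cl ^ 2 / 2 + Yt j cl ^ 2 / 2 else 0) := by
      rcases (hrll i j).lt_or_eq with hpos | h0
      · rw [if_pos ⟨hij, hpos⟩, if_neg (fun h => hpos.ne' h.2)]
        linarith
      · rw [if_neg (fun h => lt_irrefl _ (h0 ▸ h.2)), if_pos ⟨hij, h0.symm⟩, ← h0]
        have key : pNMR P f 𝒜 i cl * pNMR P f 𝒜 j cl *
            (Yt i cl / pNMR P f 𝒜 i cl * (Yt j cl / pNMR P f 𝒜 j cl))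
            = Yt i cl * Yt j cl := by field_simp
        nlinarith [key, sq_nonneg (Yt i cl + Yt j cl)]
    have Hkl : (if j ≠ i ∧ 0 < pPairNMR P f 𝒜 i j ck cl then
            (pPairNMR P f 𝒜 i j ck cl - pNMR P f 𝒜 i ck * pNMR P f 𝒜 j cl) *
              (Yt i ck / pNMR P f 𝒜 i ck * (Yt j cl / pNMR P f 𝒜 j cl))
          else 0)
        - (if pPairNMR P f 𝒜 i j ck cl = 0 then
            Yt i ck ^ 2 / 2 + Yt j cl ^ 2 / 2 else 0)
        ≤ (pPairNMR P f 𝒜 i j ck cl - pNMR P f 𝒜 i ck * pNMR P f 𝒜 j cl) *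
          (Yt i ck / pNMR P f 𝒜 i ck * (Yt j cl / pNMR P f 𝒜 j cl)) := by
      rcases (hrkl i j).lt_or_eq with hpos | h0
      · rw [if_pos ⟨hij, hpos⟩, if_neg hpos.ne']
        linarith
      · rw [if_neg (fun h => lt_irrefl _ (h0 ▸ h.2)), if_pos h0.symm, ← h0]
        have key : pNMR P f 𝒜 i ck * pNMR P f 𝒜 j cl *
            (Yt i ck / pNMR P f 𝒜 i ck * (Yt j cl / pNMR P f 𝒜 j cl))
            = Yt i ck * Yt j cl := by field_simp
        nlinarith [key, sq_nonneg (Yt i ck - Yt j cl)]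
    linarith

end PairIneq

/-- Proposition A.2: the proposed variance estimator of the NMR causal effect
estimator is conservative. -/
theorem NMR_variance_estimator_conservative {n : ℕ} {Z C : Type}
    [Fintype Z] [Fintype C] [DecidableEq C]
    (P : Z → ℝ) (hP : ∀ z, 0 ≤ P z) (hPsum : ∑ z, P z = 1)
    (f : Z → (Fin n → Bool) → C) (Y : Fin n → Z → ℝ) (Yt : Fin n → C → ℝ)
    (𝒜 : Finset (Fin n → Fin n → Bool))
    (h𝒜Net : ∀ A ∈ 𝒜, IsNetwork A)
    (hJoint : JointPositivity P f 𝒜)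
    (h𝒜corr : ∃ A ∈ 𝒜, CorrectlySpecifies P f Y Yt A)
    (Astar : Fin n → Fin n → Bool) (hAstarNet : IsNetwork Astar)
    (hAstar : CorrectlySpecifies P f Y Yt Astar)
    (Yo : Z → Fin n → ℝ) (hYo : ∀ (z : Z) (i : Fin n), Yo z i = Yt i (f z (Astar i))) :
    ∀ ck cl : C, ck ≠ cl →
      varZ P (fun z => tauHatNMR P f 𝒜 Yo ck cl z) ≤
        expec P (fun z => varHatTauNMR P f 𝒜 Yo ck cl z) := by
  intro ck cl hkl
  obtain ⟨A0, hA0mem, hA0corr⟩ := h𝒜corr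
  -- observed outcomes coincide with potential outcomes on the exposure event
  have hIYo : ∀ (c : C) (z : Z) (i : Fin n),
      indAll f 𝒜 z i c * Yo z i = indAll f 𝒜 z i c * Yt i c := by
    intro c z i
    rcases indAll_zero_or_one f 𝒜 z i c with h | h
    · rw [h, zero_mul, zero_mul]
    · have hf : f z (A0 i) = c := indAll_eq_one_imp f 𝒜 h hA0mem
      have e : Yo z i = Yt i c := by
        rw [hYo z i, ← hAstar.2 i z, hA0corr.2 i z, hf]
      rw [e]
  have hyk := hIYo ck
  have hyl := hIYo cl
  have hqk : ∀ i, 0 < pNMR P f 𝒜 i ck := fun i => hJoint i ck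
  have hql : ∀ i, 0 < pNMR P f 𝒜 i cl := fun i => hJoint i cl
  have hdkk : ∀ i, pPairNMR P f 𝒜 i i ck ck = pNMR P f 𝒜 i ck := fun i =>
    expec_congr P (fun z => indAll_mul_self f 𝒜 z i ck)
  have hdll : ∀ i, pPairNMR P f 𝒜 i i cl cl = pNMR P f 𝒜 i cl := fun i =>
    expec_congr P (fun z => indAll_mul_self f 𝒜 z i cl)
  have hIkl : ∀ (z : Z) (i : Fin n), indAll f 𝒜 z i ck * indAll f 𝒜 z i cl = 0 := by
    intro z i
    rcases indAll_zero_or_one f 𝒜 z i ck with h | h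
    · rw [h, zero_mul]
    · rcases indAll_zero_or_one f 𝒜 z i cl with h' | h'
      · rw [h', mul_zero]
      · exact absurd ((indAll_eq_one_imp f 𝒜 h hA0mem).symm.trans
          (indAll_eq_one_imp f 𝒜 h' hA0mem)) hkl
  have hdkl : ∀ i, pPairNMR P f 𝒜 i i ck cl = 0 := by
    intro i
    have h1 : pPairNMR P f 𝒜 i i ck cl = expec P (fun _ => (0 : ℝ)) :=
      expec_congr P (fun z => hIkl z i)
    rw [h1]
    unfold expec
    simp
  rw [varZ_tauHat P f 𝒜 Yo Yt hPsum ck cl (hyk) (hyl)]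
  have hE : expec P (fun z => varHatTauNMR P f 𝒜 Yo ck cl z)
      = expec P (fun z => varHatNMR P f 𝒜 Yo ck z)
        + expec P (fun z => varHatNMR P f 𝒜 Yo cl z)
        - 2 * expec P (fun z => covHatNMR P f 𝒜 Yo ck cl z) := by
    unfold varHatTauNMR
    rw [expec_sub, expec_add, expec_const_mul]
  rw [hE, expec_varHat P f 𝒜 Yo Yt ck hqk hyk, expec_varHat P f 𝒜 Yo Yt cl hql hyl,
    expec_covHat P f 𝒜 Yo Yt ck cl hqk hql hyk hyl]
  rw [show ((1 : ℝ) / (n : ℝ)) ^ 2 = 1 / (n : ℝ) ^ 2 by rw [div_pow, one_pow]]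
  exact assemble (1 / (n : ℝ) ^ 2) (by positivity) _ _ _ _
    (pair_ineq P f 𝒜 Yt ck cl hqk hql
      (fun i j => pPairNMR_nonneg f 𝒜 P hP i j ck ck)
      (fun i j => pPairNMR_nonneg f 𝒜 P hP i j cl cl)
      (fun i j => pPairNMR_nonneg f 𝒜 P hP i j ck cl)
      hdkk hdll hdkl)
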